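/- If in addition 1 − max_{i∈η} σ_i² > 2‖X̂ − X‖ (so that I − Γ² and I − Γ̂² are invertible), then ‖(I − Γ̂²)⁻¹ − (I − Γ²)⁻¹‖ ≤ 2‖X̂ − X‖ / (1 − max_{i∈η} σ_i² − 2‖X̂ − X‖)². -/

import Mathlib

/-!
Both inverses are diagonal, so the bound is entrywise:
`|(1 - σ̂ᵢ²)⁻¹ - (1 - σᵢ²)⁻¹| = |σ̂ᵢ² - σᵢ²| / ((1 - σ̂ᵢ²)(1 - σᵢ²))`.
Weyl's inequality `|σ̂ᵢ - σᵢ| ≤ ‖X̂ - X‖` together with `σᵢ² < 1 - 2‖X̂ - X‖` gives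
`|σ̂ᵢ² - σᵢ²| ≤ 2‖X̂ - X‖`, which bounds the numerator and keeps both factors of the denominator
above `1 - max σᵢ² - 2‖X̂ - X‖`. Weyl's inequality is the Courant–Fischer dimension count:
`X` stretches by at least `σᵢ` on the span of its first `i + 1` right singular vectors, `X̂` by at
most `σ̂ᵢ` on the span of its last `k - i`, and these two subspaces of `ℝᵏ` meet nontrivially.
-/

open Matrix

noncomputable def specNorm {m n : Type*} [Fintype m] [Fintype n] [DecidableEq n]
    (A : Matrix m n ℝ) : ℝ :=
  ‖LinearMap.toContinuousLinearMap (Matrix.toEuclideanLin A)‖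

noncomputable def vnorm {n : Type*} [Fintype n] (v : n → ℝ) : ℝ :=
  Real.sqrt (∑ i, v i ^ 2)

open Module WithLp
open scoped Matrix.Norms.L2Operator InnerProductSpace

section InnerProductSpace

variable {E F : Type*} [NormedAddCommGroup E] [InnerProductSpace ℝ E]
  [NormedAddCommGroup F] [InnerProductSpace ℝ F]

lemma norm_sum_sq_of_pairwise_inner_eq_zero {ι : Type*} [Fintype ι] {y : ι → F}
    (hy : Pairwise fun a b => ⟪y a, y b⟫_ℝ = 0) : ‖∑ a, y a‖ ^ 2 = ∑ a, ‖y a‖ ^ 2 := by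
  rw [← real_inner_self_eq_norm_sq, sum_inner]
  refine Finset.sum_congr rfl fun a _ => ?_
  rw [inner_sum, Finset.sum_eq_single a (fun b _ hba => hy hba.symm) (by simp),
    real_inner_self_eq_norm_sq]

variable {ι : Type*} [Fintype ι] {v : ι → E}

lemma exists_sq_norm_eq_sum_of_mem_span (hv : Orthonormal ℝ v) (T : E →ₗ[ℝ] F)
    (hT : Pairwise fun a b => ⟪T (v a), T (v b)⟫_ℝ = 0) {w : E}
    (hw : w ∈ Submodule.span ℝ (Set.range v)) :
    ∃ c : ι → ℝ, ‖w‖ ^ 2 = ∑ a, c a ^ 2 ∧ ‖T w‖ ^ 2 = ∑ a, c a ^ 2 * ‖T (v a)‖ ^ 2 := by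
  obtain ⟨c, rfl⟩ := (Submodule.mem_span_range_iff_exists_fun ℝ).1 hw
  refine ⟨c, ?_, ?_⟩
  · rw [norm_sum_sq_of_pairwise_inner_eq_zero fun a b hab => by
      simp [real_inner_smul_left, real_inner_smul_right, hv.2 hab]]
    simp [norm_smul, hv.1]
  · rw [map_sum, norm_sum_sq_of_pairwise_inner_eq_zero fun a b hab => by
      simp [real_inner_smul_left, real_inner_smul_right, hT hab]]
    simp [norm_smul, mul_pow]

lemma mul_norm_le_norm_apply_of_mem_span (hv : Orthonormal ℝ v) (T : E →ₗ[ℝ] F)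
    (hT : Pairwise fun a b => ⟪T (v a), T (v b)⟫_ℝ = 0) {s : ℝ} (hs : ∀ a, s ≤ ‖T (v a)‖)
    {w : E} (hw : w ∈ Submodule.span ℝ (Set.range v)) : s * ‖w‖ ≤ ‖T w‖ := by
  rcases le_or_gt s 0 with hs0 | hs0
  · exact (mul_nonpos_of_nonpos_of_nonneg hs0 (norm_nonneg w)).trans (norm_nonneg _)
  obtain ⟨c, hw, hTw⟩ := exists_sq_norm_eq_sum_of_mem_span hv T hT hw
  refine (pow_le_pow_iff_left₀ (by positivity) (norm_nonneg _) two_ne_zero).1 ?_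
  rw [mul_pow, hw, hTw, Finset.mul_sum]
  refine Finset.sum_le_sum fun a _ => ?_
  rw [mul_comm (s ^ 2)]
  exact mul_le_mul_of_nonneg_left (pow_le_pow_left₀ hs0.le (hs a) 2) (sq_nonneg _)

lemma norm_apply_le_mul_norm_of_mem_span (hv : Orthonormal ℝ v) (T : E →ₗ[ℝ] F)
    (hT : Pairwise fun a b => ⟪T (v a), T (v b)⟫_ℝ = 0) {s : ℝ} (hs0 : 0 ≤ s)
    (hs : ∀ a, ‖T (v a)‖ ≤ s) {w : E} (hw : w ∈ Submodule.span ℝ (Set.range v)) :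
    ‖T w‖ ≤ s * ‖w‖ := by
  obtain ⟨c, hw, hTw⟩ := exists_sq_norm_eq_sum_of_mem_span hv T hT hw
  refine (pow_le_pow_iff_left₀ (norm_nonneg _) (by positivity) two_ne_zero).1 ?_
  rw [mul_pow, hw, hTw, Finset.mul_sum]
  refine Finset.sum_le_sum fun a _ => ?_
  rw [mul_comm (s ^ 2)]
  exact mul_le_mul_of_nonneg_left (pow_le_pow_left₀ (norm_nonneg _) (hs a) 2) (sq_nonneg _)

end InnerProductSpace

lemma le_add_of_finrank_lt_finrank_add_finrank {E F : Type*} [NormedAddCommGroup E]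
    [NormedSpace ℝ E] [FiniteDimensional ℝ E] [NormedAddCommGroup F] [NormedSpace ℝ F]
    {A B : E →ₗ[ℝ] F}
    {W W' : Submodule ℝ E} (hdim : finrank ℝ E < finrank ℝ W + finrank ℝ W') {a b ε : ℝ}
    (hA : ∀ w ∈ W, a * ‖w‖ ≤ ‖A w‖) (hB : ∀ w ∈ W', ‖B w‖ ≤ b * ‖w‖)
    (hAB : ∀ x, ‖A x - B x‖ ≤ ε * ‖x‖) : a ≤ b + ε := by
  obtain ⟨w, hwW, hwW', hw0⟩ : ∃ w ∈ W, w ∈ W' ∧ w ≠ 0 := by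
    by_contra! h
    exact hdim.not_ge <| Submodule.finrank_add_finrank_le_of_disjoint <|
      Submodule.disjoint_def.2 h
  refine le_of_mul_le_mul_right ?_ (norm_pos_iff.2 hw0)
  calc a * ‖w‖ ≤ ‖A w‖ := hA w hwW
    _ ≤ ‖B w‖ + ‖A w - B w‖ := norm_le_norm_add_norm_sub' _ _
    _ ≤ b * ‖w‖ + ε * ‖w‖ := add_le_add (hB w hwW') (hAB w)
    _ = (b + ε) * ‖w‖ := by ring

section Matrix

variable {m n l : Type*}

lemma specNorm_eq_norm [Fintype m] [Fintype n] [DecidableEq n] (A : Matrix m n ℝ) :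
    specNorm A = ‖A‖ :=
  rfl

lemma inner_toLp_transpose_apply [Fintype m] (A : Matrix m n ℝ) (a b : n) :
    ⟪toLp 2 (Aᵀ a), toLp 2 (Aᵀ b)⟫_ℝ = (Aᵀ * A) a b := by
  simp [PiLp.inner_apply, mul_apply, mul_comm]

lemma orthonormal_toLp_transpose [Fintype m] [DecidableEq n] {V : Matrix m n ℝ}
    (hV : Vᵀ * V = 1) : Orthonormal ℝ fun a => toLp 2 (Vᵀ a) := by
  rw [orthonormal_iff_ite]
  intro a b
  rw [inner_toLp_transpose_apply, hV, one_apply]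

lemma toEuclideanLin_toLp_transpose [Fintype n] [DecidableEq n] (X : Matrix m n ℝ)
    (V : Matrix n l ℝ) (a : l) :
    toEuclideanLin X (toLp 2 (Vᵀ a)) = toLp 2 ((X * V)ᵀ a) := by
  ext i
  simp [mulVec, dotProduct, mul_apply]

lemma transpose_mul_mul_self_of_eq_mul_mul_transpose [Fintype m] [Fintype n] [DecidableEq m]
    [DecidableEq n] {X D : Matrix m n ℝ} {U : Matrix m m ℝ} {V : Matrix n n ℝ} (hU : Uᵀ * U = 1)
    (hV : Vᵀ * V = 1)
    (hX : X = U * D * Vᵀ) : (X * V)ᵀ * (X * V) = Dᵀ * D := by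
  have hXV : X * V = U * D := by rw [hX, Matrix.mul_assoc, hV, Matrix.mul_one]
  rw [hXV, transpose_mul, Matrix.mul_assoc, ← Matrix.mul_assoc Uᵀ, hU, Matrix.one_mul]

end Matrix

section SingularValueDecomposition

def rectDiagonal (p k : ℕ) (σ : ℕ → ℝ) : Matrix (Fin p) (Fin k) ℝ :=
  of fun i j => if (i : ℕ) = j then σ i else 0

lemma rectDiagonal_transpose_mul_self_apply {p k : ℕ} (σ : ℕ → ℝ) (a b : Fin k) :
    ((rectDiagonal p k σ)ᵀ * rectDiagonal p k σ) a b =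
      if a = b ∧ (a : ℕ) < p then σ a ^ 2 else 0 := by
  simp only [mul_apply, transpose_apply, rectDiagonal, of_apply]
  rcases lt_or_ge (a : ℕ) p with ha | ha
  · rw [Fintype.sum_eq_single ⟨a, ha⟩ fun i hi => by
      simp [show (i : ℕ) ≠ a from fun h => hi (Fin.ext h)]]
    by_cases hab : a = b
    · subst hab
      simp [ha, sq]
    · simp [hab, Fin.val_eq_val]
  · rw [Finset.sum_eq_zero fun i _ => by simp [(i.2.trans_le ha).ne]]
    simp [ha.not_gt]

variable {p k : ℕ} {X : Matrix (Fin p) (Fin k) ℝ} {U : Matrix (Fin p) (Fin p) ℝ}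
  {V : Matrix (Fin k) (Fin k) ℝ} {σ : ℕ → ℝ}

lemma inner_toEuclideanLin_toLp_transpose_of_svd (hU : Uᵀ * U = 1) (hV : Vᵀ * V = 1)
    (hX : X = U * rectDiagonal p k σ * Vᵀ) (a b : Fin k) :
    ⟪toEuclideanLin X (toLp 2 (Vᵀ a)), toEuclideanLin X (toLp 2 (Vᵀ b))⟫_ℝ =
      if a = b ∧ (a : ℕ) < p then σ a ^ 2 else 0 := by
  rw [toEuclideanLin_toLp_transpose, toEuclideanLin_toLp_transpose, inner_toLp_transpose_apply,
    transpose_mul_mul_self_of_eq_mul_mul_transpose hU hV hX,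
    rectDiagonal_transpose_mul_self_apply]

lemma pairwise_inner_toEuclideanLin_toLp_transpose_of_svd (hU : Uᵀ * U = 1) (hV : Vᵀ * V = 1)
    (hX : X = U * rectDiagonal p k σ * Vᵀ) :
    Pairwise fun a b : Fin k =>
      ⟪toEuclideanLin X (toLp 2 (Vᵀ a)), toEuclideanLin X (toLp 2 (Vᵀ b))⟫_ℝ = 0 :=
  fun a b hab =>
    (inner_toEuclideanLin_toLp_transpose_of_svd hU hV hX a b).trans (if_neg (by tauto))

lemma norm_toEuclideanLin_toLp_transpose_of_svd (hU : Uᵀ * U = 1) (hV : Vᵀ * V = 1)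
    (hX : X = U * rectDiagonal p k σ * Vᵀ) (a : Fin k) :
    ‖toEuclideanLin X (toLp 2 (Vᵀ a))‖ = if (a : ℕ) < p then |σ a| else 0 := by
  rw [← Real.sqrt_sq (norm_nonneg _), ← real_inner_self_eq_norm_sq,
    inner_toEuclideanLin_toLp_transpose_of_svd hU hV hX]
  split_ifs <;> simp_all [Real.sqrt_sq_eq_abs]

lemma exists_finrank_eq_forall_mul_norm_le_of_svd (hU : Uᵀ * U = 1) (hV : Vᵀ * V = 1)
    (hX : X = U * rectDiagonal p k σ * Vᵀ) (hσ : Antitone σ) (i : Fin k) (hi : (i : ℕ) < p) :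
    ∃ W : Submodule ℝ (EuclideanSpace ℝ (Fin k)),
      finrank ℝ W = i + 1 ∧ ∀ w ∈ W, σ i * ‖w‖ ≤ ‖toEuclideanLin X w‖ := by
  let v : Finset.Iic i → EuclideanSpace ℝ (Fin k) := fun a => toLp 2 (Vᵀ a)
  have hv : Orthonormal ℝ v := (orthonormal_toLp_transpose hV).comp _ Subtype.val_injective
  refine ⟨Submodule.span ℝ (Set.range v), ?_, fun w hw =>
    mul_norm_le_norm_apply_of_mem_span hv _ (fun a b hab => ?_) (fun a => ?_) hw⟩
  · rw [finrank_span_eq_card hv.linearIndependent, Fintype.card_coe, Fin.card_Iic]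
  · exact pairwise_inner_toEuclideanLin_toLp_transpose_of_svd hU hV hX
      (Subtype.val_injective.ne hab)
  · have ha : (a.1 : ℕ) ≤ i := Fin.le_iff_val_le_val.1 (Finset.mem_Iic.1 a.2)
    rw [norm_toEuclideanLin_toLp_transpose_of_svd hU hV hX, if_pos (ha.trans_lt hi)]
    exact (hσ ha).trans (le_abs_self _)

lemma exists_finrank_eq_forall_norm_le_mul_of_svd (hU : Uᵀ * U = 1) (hV : Vᵀ * V = 1)
    (hX : X = U * rectDiagonal p k σ * Vᵀ) (hσ : Antitone σ) (hσ0 : ∀ i, 0 ≤ σ i) (i : Fin k) :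
    ∃ W : Submodule ℝ (EuclideanSpace ℝ (Fin k)),
      finrank ℝ W = k - i ∧ ∀ w ∈ W, ‖toEuclideanLin X w‖ ≤ σ i * ‖w‖ := by
  let v : Finset.Ici i → EuclideanSpace ℝ (Fin k) := fun a => toLp 2 (Vᵀ a)
  have hv : Orthonormal ℝ v := (orthonormal_toLp_transpose hV).comp _ Subtype.val_injective
  refine ⟨Submodule.span ℝ (Set.range v), ?_, fun w hw =>
    norm_apply_le_mul_norm_of_mem_span hv _ (fun a b hab => ?_) (hσ0 i) (fun a => ?_) hw⟩
  · rw [finrank_span_eq_card hv.linearIndependent, Fintype.card_coe, Fin.card_Ici]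
  · exact pairwise_inner_toEuclideanLin_toLp_transpose_of_svd hU hV hX
      (Subtype.val_injective.ne hab)
  · rw [norm_toEuclideanLin_toLp_transpose_of_svd hU hV hX]
    split_ifs
    · rw [abs_of_nonneg (hσ0 _)]
      exact hσ (Fin.le_iff_val_le_val.1 (Finset.mem_Ici.1 a.2))
    · exact hσ0 i

theorem le_add_norm_sub_of_svd {Xh : Matrix (Fin p) (Fin k) ℝ} {Uh : Matrix (Fin p) (Fin p) ℝ}
    {Vh : Matrix (Fin k) (Fin k) ℝ} {σh : ℕ → ℝ} (hU : Uᵀ * U = 1) (hV : Vᵀ * V = 1)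
    (hUh : Uhᵀ * Uh = 1) (hVh : Vhᵀ * Vh = 1) (hX : X = U * rectDiagonal p k σ * Vᵀ)
    (hXh : Xh = Uh * rectDiagonal p k σh * Vhᵀ) (hσ : Antitone σ) (hσh : Antitone σh)
    (hσh0 : ∀ i, 0 ≤ σh i) (i : Fin k) (hi : (i : ℕ) < p) :
    σ i ≤ σh i + ‖Xh - X‖ := by
  obtain ⟨W, hW, hXW⟩ := exists_finrank_eq_forall_mul_norm_le_of_svd hU hV hX hσ i hi
  obtain ⟨W', hW', hXhW'⟩ := exists_finrank_eq_forall_norm_le_mul_of_svd hUh hVh hXh hσh hσh0 i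
  have hdim : finrank ℝ (EuclideanSpace ℝ (Fin k)) < finrank ℝ W + finrank ℝ W' := by
    rw [finrank_euclideanSpace_fin, hW, hW']
    omega
  refine le_add_of_finrank_lt_finrank_add_finrank hdim hXW hXhW' fun x => ?_
  rw [← LinearMap.sub_apply, ← map_sub, norm_sub_rev Xh]
  exact (X - Xh).l2_opNorm_mulVec x

theorem abs_sub_le_norm_sub_of_svd {Xh : Matrix (Fin p) (Fin k) ℝ}
    {Uh : Matrix (Fin p) (Fin p) ℝ} {Vh : Matrix (Fin k) (Fin k) ℝ} {σh : ℕ → ℝ}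
    (hU : Uᵀ * U = 1) (hV : Vᵀ * V = 1) (hUh : Uhᵀ * Uh = 1) (hVh : Vhᵀ * Vh = 1)
    (hX : X = U * rectDiagonal p k σ * Vᵀ) (hXh : Xh = Uh * rectDiagonal p k σh * Vhᵀ)
    (hσ : Antitone σ) (hσ0 : ∀ i, 0 ≤ σ i) (hσh : Antitone σh) (hσh0 : ∀ i, 0 ≤ σh i)
    (i : Fin k) (hi : (i : ℕ) < p) :
    |σh i - σ i| ≤ ‖Xh - X‖ := by
  have h := le_add_norm_sub_of_svd hU hV hUh hVh hX hXh hσ hσh hσh0 i hi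
  have h' := le_add_norm_sub_of_svd hUh hVh hU hV hXh hX hσh hσ hσ0 i hi
  rw [norm_sub_rev] at h'
  exact abs_sub_le_iff.2 ⟨by linarith, by linarith⟩

end SingularValueDecomposition

lemma abs_sq_sub_sq_le_of_abs_sub_le {s t ε : ℝ} (hts : |t - s| ≤ ε) (hs : s ^ 2 < 1 - 2 * ε) :
    |t ^ 2 - s ^ 2| ≤ 2 * ε := by
  have hε : 0 ≤ ε := (abs_nonneg _).trans hts
  -- `s ^ 2 < 1 - 2 * ε ≤ (1 - ε) ^ 2`
  have hs' : |s| < 1 - ε := abs_lt_of_sq_lt_sq (by nlinarith) (by nlinarith)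
  have hts' : |t + s| ≤ 2 :=
    calc |t + s| = |(t - s) + 2 * s| := by ring_nf
      _ ≤ |t - s| + |2 * s| := abs_add_le _ _
      _ = |t - s| + 2 * |s| := by rw [abs_mul, abs_two]
      _ ≤ 2 := by linarith
  calc |t ^ 2 - s ^ 2| = |t - s| * |t + s| := by rw [← abs_mul]; ring_nf
    _ ≤ ε * 2 := mul_le_mul hts hts' (abs_nonneg _) hε
    _ = 2 * ε := mul_comm _ _

lemma abs_inv_sub_inv_le {x y d δ : ℝ} (hd : 0 < d) (hx : d ≤ x) (hy : d ≤ y)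
    (hxy : |x - y| ≤ δ) : |x⁻¹ - y⁻¹| ≤ δ / d ^ 2 := by
  have hx0 : 0 < x := hd.trans_le hx
  have hy0 : 0 < y := hd.trans_le hy
  rw [inv_sub_inv hx0.ne' hy0.ne', abs_div, abs_of_pos (mul_pos hx0 hy0), abs_sub_comm, sq]
  exact div_le_div₀ ((abs_nonneg _).trans hxy) hxy (mul_pos hd hd)
    (mul_le_mul hx hy hd.le hx0.le)

lemma inv_one_sub_diagonal_sq {n : Type*} [Fintype n] [DecidableEq n] {d : n → ℝ}
    (hd : ∀ i, d i ^ 2 ≠ 1) : (1 - diagonal d ^ 2)⁻¹ = diagonal fun i => (1 - d i ^ 2)⁻¹ := by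
  refine inv_eq_left_inv ?_
  rw [sq, diagonal_mul_diagonal, ← diagonal_one, diagonal_sub, diagonal_mul_diagonal]
  congr 1
  ext i
  rw [← sq]
  exact inv_mul_cancel₀ (sub_ne_zero.2 (hd i).symm)

theorem stmt_16_general
    (p k : ℕ)
    (X Xh : Matrix (Fin p) (Fin k) ℝ)
    (U Uh : Matrix (Fin p) (Fin p) ℝ) (V Vh : Matrix (Fin k) (Fin k) ℝ)
    (hU : Uᵀ * U = 1) (hV : Vᵀ * V = 1) (hUh : Uhᵀ * Uh = 1) (hVh : Vhᵀ * Vh = 1)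
    (σ σh : ℕ → ℝ)
    (hσanti : ∀ i j, i ≤ j → σ j ≤ σ i) (hσnonneg : ∀ i, 0 ≤ σ i)
    (hσhanti : ∀ i j, i ≤ j → σh j ≤ σh i) (hσhnonneg : ∀ i, 0 ≤ σh i)
    (hSVD : X = U * (Matrix.of fun (i : Fin p) (j : Fin k) =>
        if (i : ℕ) = (j : ℕ) then σ (i : ℕ) else 0) * Vᵀ)
    (hSVDh : Xh = Uh * (Matrix.of fun (i : Fin p) (j : Fin k) =>
        if (i : ℕ) = (j : ℕ) then σh (i : ℕ) else 0) * Vhᵀ)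
    (η : Finset ℕ) (hη : ∀ i ∈ η, i < min p k)
    (hηne : η.Nonempty)
    (Γ Γh : Matrix {x // x ∈ η} {x // x ∈ η} ℝ)
    (hΓ : Γ = Matrix.diagonal (fun i : {x // x ∈ η} => σ i.1))
    (hΓh : Γh = Matrix.diagonal (fun i : {x // x ∈ η} => σh i.1))
    (hmax : 2 * specNorm (Xh - X) < 1 - η.sup' hηne (fun i => σ i ^ 2)) :
    specNorm ((1 - Γh ^ 2)⁻¹ - (1 - Γ ^ 2)⁻¹)
      ≤ 2 * specNorm (Xh - X)
          / (1 - η.sup' hηne (fun i => σ i ^ 2) - 2 * specNorm (Xh - X)) ^ 2 := by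
  simp only [specNorm_eq_norm] at hmax ⊢
  set ε := ‖Xh - X‖
  set M := η.sup' hηne fun i => σ i ^ 2
  have hσM (i : η) : σ i ^ 2 ≤ M := η.le_sup' (fun i => σ i ^ 2) i.2
  have hσhσ (i : η) : |σh i ^ 2 - σ i ^ 2| ≤ 2 * ε := by
    have hi := hη i i.2
    refine abs_sq_sub_sq_le_of_abs_sub_le ?_ (by linarith [hσM i])
    exact abs_sub_le_norm_sub_of_svd hU hV hUh hVh hSVD hSVDh hσanti hσnonneg hσhanti hσhnonneg
      ⟨i, hi.trans_le (min_le_right p k)⟩ (hi.trans_le (min_le_left p k))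
  have hd : 0 < 1 - M - 2 * ε := by linarith
  have hσ1 (i : η) : 1 - M - 2 * ε ≤ 1 - σ i ^ 2 := by linarith [hσM i, norm_nonneg (Xh - X)]
  have hσh1 (i : η) : 1 - M - 2 * ε ≤ 1 - σh i ^ 2 := by linarith [hσM i, (abs_le.1 (hσhσ i)).2]
  rw [hΓ, hΓh, inv_one_sub_diagonal_sq fun i : η => (show σh i ^ 2 < 1 by linarith [hσh1 i]).ne,
    inv_one_sub_diagonal_sq fun i : η => (show σ i ^ 2 < 1 by linarith [hσ1 i]).ne, diagonal_sub,
    l2_opNorm_diagonal, pi_norm_le_iff_of_nonneg (by positivity)]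
  intro i
  refine abs_inv_sub_inv_le hd (hσh1 i) (hσ1 i) ?_
  rw [sub_sub_sub_cancel_left, abs_sub_comm]
  exact hσhσ i

theorem stmt_16
    (p k : ℕ)
    (X Xh : Matrix (Fin p) (Fin k) ℝ)
    (U Uh : Matrix (Fin p) (Fin p) ℝ) (V Vh : Matrix (Fin k) (Fin k) ℝ)
    (hU : Uᵀ * U = 1) (hV : Vᵀ * V = 1) (hUh : Uhᵀ * Uh = 1) (hVh : Vhᵀ * Vh = 1)
    (σ σh : ℕ → ℝ)
    (hσanti : ∀ i j, i ≤ j → σ j ≤ σ i) (hσnonneg : ∀ i, 0 ≤ σ i)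
    (hσhanti : ∀ i j, i ≤ j → σh j ≤ σh i) (hσhnonneg : ∀ i, 0 ≤ σh i)
    (hSVD : X = U * (Matrix.of fun (i : Fin p) (j : Fin k) =>
        if (i : ℕ) = (j : ℕ) then σ (i : ℕ) else 0) * Vᵀ)
    (hSVDh : Xh = Uh * (Matrix.of fun (i : Fin p) (j : Fin k) =>
        if (i : ℕ) = (j : ℕ) then σh (i : ℕ) else 0) * Vhᵀ)
    (η : Finset ℕ) (hη : ∀ i ∈ η, i < min p k)
    (Δ : ℝ)
    (hΔ : ∀ i ∈ η, ∀ j, j < min p k → j ∉ η → Δ ≤ |σ i - σ j|)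
    (hX1 : specNorm X ≤ 1) (hXh1 : specNorm Xh ≤ 1)
    (hgap : 4 * specNorm (Xh - X) < Δ)
    (hηne : η.Nonempty)
    (Γ Γh : Matrix {x // x ∈ η} {x // x ∈ η} ℝ)
    (hΓ : Γ = Matrix.diagonal (fun i : {x // x ∈ η} => σ i.1))
    (hΓh : Γh = Matrix.diagonal (fun i : {x // x ∈ η} => σh i.1))
    (hmax : 2 * specNorm (Xh - X) < 1 - η.sup' hηne (fun i => σ i ^ 2)) :
    specNorm ((1 - Γh ^ 2)⁻¹ - (1 - Γ ^ 2)⁻¹)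
      ≤ 2 * specNorm (Xh - X)
          / (1 - η.sup' hηne (fun i => σ i ^ 2) - 2 * specNorm (Xh - X)) ^ 2 :=
  stmt_16_general p k X Xh U Uh V Vh hU hV hUh hVh σ σh hσanti hσnonneg hσhanti hσhnonneg hSVD hSVDh
    η hη hηne Γ Γh hΓ hΓh hmax
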